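/- arXiv:2012.10612 — 8 statements merged into one kernel-verified Lean document; each statement's English description precedes it below -/
import Mathlib

section
/- Let 1 → K → Γ → G → 1 be an exact sequence of groups with inclusion i : K → Γ and projection π : Γ → G, and let A be an abelian group. Define 𝒞(Γ) = {F : Γ → A | F(kγ) = F(γk) = F(γ) + F(k) for all γ ∈ Γ, k ∈ K}. Then for F ∈ 𝒞(Γ), the 2-cochain 𝔇(F) on G given by 𝔇(F)(g₁,g₂) = F(γ₂) − F(γ₁γ₂) + F(γ₁), where γⱼ ∈ Γ are any lifts of gⱼ, is well defined, i.e., independent of the choices of lifts γ₁, γ₂. -/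
/-- well-definedness of the 2-cochain `𝔇(F)` on `G`, i.e. the value
`F γ₂ - F (γ₁ * γ₂) + F γ₁` is independent of the choice of lifts of `g₁, g₂`. -/
theorem frakD_well_defined {K Γ G : Type*} [Group K] [Group Γ] [Group G]
    {A : Type*} [AddCommGroup A]
    (i : K →* Γ) (π : Γ →* G)
    (hi : Function.Injective i) (hπ : Function.Surjective π)
    (hexact : i.range = π.ker)
    (F : Γ → A)
    (hF : ∀ (γ : Γ) (k : K),
      F (i k * γ) = F γ + F (i k) ∧ F (γ * i k) = F γ + F (i k)) :
    ∀ γ₁ γ₂ γ₁' γ₂' : Γ, π γ₁ = π γ₁' → π γ₂ = π γ₂' →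
      F γ₂ - F (γ₁ * γ₂) + F γ₁ = F γ₂' - F (γ₁' * γ₂') + F γ₁' := by
  -- helper: elements with equal image differ by an element of i.range on the right
  have hdiff : ∀ γ δ : Γ, π γ = π δ → ∃ k : K, δ = γ * i k := by
    intro γ δ h
    have : γ⁻¹ * δ ∈ π.ker := by
      simp [MonoidHom.mem_ker, h]
    rw [← hexact] at this
    obtain ⟨k, hk⟩ := this
    exact ⟨k, by rw [hk]; group⟩
  -- helper: i k can be moved across γ, preserving F-value
  have hmove : ∀ (γ : Γ) (k : K), ∃ k' : K, i k * γ = γ * i k' ∧ F (i k') = F (i k) := by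
    intro γ k
    have hker : γ⁻¹ * i k * γ ∈ π.ker := by
      have : i k ∈ π.ker := by rw [← hexact]; exact ⟨k, rfl⟩
      simp [MonoidHom.mem_ker] at this ⊢
      simp [this]
    rw [← hexact] at hker
    obtain ⟨k', hk'⟩ := hker
    have heq : i k * γ = γ * i k' := by rw [hk']; group
    refine ⟨k', heq, ?_⟩
    have h1 := (hF γ k).1
    have h2 := (hF γ k').2
    rw [heq] at h1; rw [h1] at h2
    exact (add_left_cancel h2).symm
  intro γ₁ γ₂ γ₁' γ₂' h1 h2
  obtain ⟨k₁, rfl⟩ := hdiff γ₁ γ₁' h1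
  obtain ⟨k₂, rfl⟩ := hdiff γ₂ γ₂' h2
  obtain ⟨k₁', hk₁', hFk₁'⟩ := hmove (γ₂ * i k₂) k₁
  have hprod : γ₁ * i k₁ * (γ₂ * i k₂) = γ₁ * γ₂ * i k₂ * i k₁' := by
    rw [mul_assoc γ₁ (i k₁) _, hk₁']; group
  rw [hprod, (hF _ k₁').2, (hF _ k₂).2, (hF _ k₂).2, (hF _ k₁).2, hFk₁']
  abel
end

section
/- Let 1 → K →^i Γ →^π G → 1 be an exact sequence of groups and A an abelian group. Then the restriction map i* : 𝒞(Γ) → Hom_Γ(K, A) sending F to F|_K is surjective onto the set of Γ-invariant homomorphisms K → A. (Explicitly: for any Γ-invariant homomorphism f : K → A there exists F ∈ 𝒞(Γ) with F|_K = f; such F is given by F(γ) = f(γ · s(π(γ))⁻¹) for a set-theoretic section s : G → Γ of π with s(1) = 1.) -/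
/-- every `Γ`-invariant homomorphism `f : K → A` extends to an element
of `𝒞(Γ)`, i.e. the restriction map `𝒞(Γ) → Hom_Γ(K, A)` is surjective. -/
theorem restriction_surjective {K Γ G : Type*} [Group K] [Group Γ] [Group G]
    {A : Type*} [AddCommGroup A]
    (i : K →* Γ) (π : Γ →* G)
    (hi : Function.Injective i) (hπ : Function.Surjective π)
    (hexact : i.range = π.ker)
    (f : K → A)
    (hf_hom : ∀ k k' : K, f (k * k') = f k + f k')
    (hf_inv : ∀ (γ : Γ) (k k' : K), i k' = γ⁻¹ * i k * γ → f k' = f k) :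
    ∃ F : Γ → A,
      (∀ (γ : Γ) (k : K),
        F (i k * γ) = F γ + F (i k) ∧ F (γ * i k) = F γ + F (i k)) ∧
      (∀ k : K, F (i k) = f k) := by
  classical
  -- choose a section s of π with s 1 = 1
  obtain ⟨s, hs1, hs2⟩ : ∃ s : G → Γ, (∀ g, π (s g) = g) ∧ s 1 = 1 := by
    refine ⟨fun g => if g = 1 then 1 else Function.surjInv hπ g, fun g => ?_, by simp⟩
    by_cases h : g = 1 <;> simp [h, Function.surjInv_eq hπ]
  have hker : ∀ γ : Γ, ∃ k : K, i k = γ * (s (π γ))⁻¹ := by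
    intro γ
    have hmem : γ * (s (π γ))⁻¹ ∈ π.ker := by
      simp [MonoidHom.mem_ker, hs1]
    rw [← hexact] at hmem
    exact hmem
  choose k hk using hker
  have hπi : ∀ k₀ : K, π (i k₀) = 1 := by
    intro k₀
    have : i k₀ ∈ π.ker := hexact ▸ ⟨k₀, rfl⟩
    exact this
  have hFk : ∀ k₀ : K, k (i k₀) = k₀ := by
    intro k₀
    apply hi
    rw [hk (i k₀), hπi k₀, hs2]
    simp
  refine ⟨fun γ => f (k γ), fun γ k₀ => ⟨?_, ?_⟩, fun k₀ => by beta_reduce; rw [hFk]⟩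
  · -- F (i k₀ * γ) = F γ + F (i k₀)
    have hπeq : π (i k₀ * γ) = π γ := by simp [hπi k₀]
    have hkey : k (i k₀ * γ) = k₀ * k γ := by
      apply hi
      rw [hk, hπeq, map_mul, hk γ]
      group
    beta_reduce
    rw [hkey, hf_hom, hFk, add_comm]
  · -- F (γ * i k₀) = F γ + F (i k₀)
    have hπeq : π (γ * i k₀) = π γ := by simp [hπi k₀]
    obtain ⟨k₁, hk₁⟩ : ∃ k₁ : K, i k₁ = γ * i k₀ * γ⁻¹ := by
      have hmem : γ * i k₀ * γ⁻¹ ∈ π.ker := by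
        simp [MonoidHom.mem_ker, hπi k₀]
      rw [← hexact] at hmem
      exact hmem
    have hkey : k (γ * i k₀) = k₁ * k γ := by
      apply hi
      rw [hk, hπeq, map_mul, hk γ, hk₁]
      group
    have hfk₁ : f k₁ = f k₀ := by
      apply hf_inv γ⁻¹
      rw [hk₁]; group
    beta_reduce
    rw [hkey, hf_hom, hfk₁, hFk, add_comm]
end

section
/- Let 1 → K → Γ → G → 1 be an exact sequence of groups and μ a homogeneous quasi-morphism on Γ whose restriction to K is a group homomorphism. Then μ ∈ 𝒞(Γ), i.e., μ(kγ) = μ(γk) = μ(γ) + μ(k) for all γ ∈ Γ and k ∈ K. -/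
def IsQuasimorphism {G : Type*} [Group G] (μ : G → ℝ) : Prop :=
  ∃ D : ℝ, ∀ g h : G, |μ (g * h) - μ g - μ h| ≤ D

def IsHomogeneous {G : Type*} [Group G] (μ : G → ℝ) : Prop :=
  ∀ (g : G) (n : ℤ), μ (g ^ n) = n * μ g

/-- if a homogeneous quasi-morphism on `Γ` restricts to a homomorphism
on the kernel `K` of `π : Γ → G`, then it belongs to `𝒞(Γ)`. -/
theorem qm_hom_on_kernel_in_C {K Γ G : Type*} [Group K] [Group Γ] [Group G]
    (i : K →* Γ) (π : Γ →* G)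
    (hi : Function.Injective i) (hπ : Function.Surjective π)
    (hexact : i.range = π.ker)
    (μ : Γ → ℝ) (hqm : IsQuasimorphism μ) (hhom : IsHomogeneous μ)
    (hrestr : ∀ k k' : K, μ (i (k * k')) = μ (i k) + μ (i k')) :
    ∀ (γ : Γ) (k : K),
      μ (i k * γ) = μ γ + μ (i k) ∧ μ (γ * i k) = μ γ + μ (i k) := by
  obtain ⟨D, hD⟩ := hqm
  have hμ1 : μ 1 = 0 := by have := hhom 1 0; simpa using this
  have hinv : ∀ g : Γ, μ g⁻¹ = -μ g := by
    intro g; have := hhom g (-1); simpa using this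
  have hpow : ∀ (g : Γ) (n : ℕ), μ (g ^ n) = n * μ g := by
    intro g n
    have := hhom g (n : ℤ)
    rw [zpow_natCast] at this
    simpa using this
  -- archimedean lemma
  have habs : ∀ (C a : ℝ), (∀ n : ℕ, (n : ℝ) * |a| ≤ C) → a = 0 := by
    intro C a h
    by_contra ha
    have hpos : 0 < |a| := abs_pos.mpr ha
    obtain ⟨n, hn⟩ := exists_nat_gt (C / |a|)
    have h1 := h n
    rw [div_lt_iff₀ hpos] at hn
    linarith
  -- conjugation invariance
  have hconj : ∀ g x : Γ, μ (g * x * g⁻¹) = μ x := by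
    intro g x
    have key : ∀ n : ℕ, (n : ℝ) * |μ (g * x * g⁻¹) - μ x| ≤ 2 * D := by
      intro n
      have hcp : (g * x * g⁻¹) ^ n = g * (x ^ n * g⁻¹) := by
        rw [conj_pow, mul_assoc]
      have h1 := hD g (x ^ n * g⁻¹)
      have h2 := hD (x ^ n) g⁻¹
      have h3 : μ ((g * x * g⁻¹) ^ n) = n * μ (g * x * g⁻¹) := hpow _ n
      rw [hcp] at h3
      have h4 : μ (x ^ n) = n * μ x := hpow _ n
      have h5 := hinv g
      have : |(n : ℝ) * μ (g * x * g⁻¹) - (n : ℝ) * μ x| ≤ 2 * D := by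
        rw [abs_le] at h1 h2 ⊢
        constructor <;> [nlinarith; nlinarith]
      calc (n : ℝ) * |μ (g * x * g⁻¹) - μ x|
          = |(n : ℝ) * (μ (g * x * g⁻¹) - μ x)| := by
            rw [abs_mul, abs_of_nonneg (by positivity : (0:ℝ) ≤ (n:ℝ))]
        _ = |(n : ℝ) * μ (g * x * g⁻¹) - (n : ℝ) * μ x| := by ring_nf
        _ ≤ 2 * D := this
    have := habs (2 * D) _ key
    linarith [this]
  have hadd : ∀ a b : Γ, a ∈ i.range → b ∈ i.range → μ (a * b) = μ a + μ b := by
    rintro _ _ ⟨k, rfl⟩ ⟨k', rfl⟩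
    rw [← map_mul]; exact hrestr k k'
  have hnorm : ∀ (g a : Γ), a ∈ i.range → g * a * g⁻¹ ∈ i.range := by
    intro g a ha
    rw [hexact] at ha ⊢
    rw [MonoidHom.mem_ker] at ha ⊢
    simp [map_mul, ha]
  -- key decomposition
  have key : ∀ (γ : Γ) (k : K) (n : ℕ), ∃ c : Γ, c ∈ i.range ∧
      (γ * i k) ^ n = γ ^ n * c ∧ μ c = n * μ (i k) := by
    intro γ k n
    induction n with
    | zero => exact ⟨1, one_mem _, by simp, by simp [hμ1]⟩
    | succ n ih =>
      obtain ⟨c, hc, heq, hμc⟩ := ih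
      refine ⟨((γ ^ n)⁻¹ * i k * γ ^ n) * c, ?_, ?_, ?_⟩
      · apply Subgroup.mul_mem _ _ hc
        have := hnorm (γ ^ n)⁻¹ (i k) ⟨k, rfl⟩
        simpa using this
      · rw [pow_succ', heq]; group
      · rw [hadd _ _ (by simpa using hnorm (γ ^ n)⁻¹ (i k) ⟨k, rfl⟩) hc, hμc]
        have : μ ((γ ^ n)⁻¹ * i k * γ ^ n) = μ (i k) := by
          have := hconj (γ ^ n)⁻¹ (i k)
          simpa using this
        rw [this]
        push_cast
        ring
  intro γ k
  have hmain : μ (γ * i k) = μ γ + μ (i k) := by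
    have hb : ∀ n : ℕ, (n : ℝ) * |μ (γ * i k) - μ γ - μ (i k)| ≤ D := by
      intro n
      obtain ⟨c, hc, heq, hμc⟩ := key γ k n
      have h1 := hD (γ ^ n) c
      rw [← heq, hpow _ n] at h1
      rw [hpow γ n, hμc] at h1
      calc (n : ℝ) * |μ (γ * i k) - μ γ - μ (i k)|
          = |(n : ℝ) * (μ (γ * i k) - μ γ - μ (i k))| := by
            rw [abs_mul, abs_of_nonneg (by positivity : (0:ℝ) ≤ (n:ℝ))]
        _ = |(n : ℝ) * μ (γ * i k) - (n : ℝ) * μ γ - (n : ℝ) * μ (i k)| := by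
            congr 1; ring
        _ ≤ D := h1
    have := habs D _ hb
    linarith
  refine ⟨?_, hmain⟩
  have : i k * γ = γ⁻¹ * (γ * i k) * γ⁻¹⁻¹ := by group
  rw [this, hconj, hmain]
end

section
/- Let Γ be a group, K a normal subgroup, μ a homogeneous quasi-morphism on Γ whose restriction to K is a homomorphism, γ ∈ Γ, k ∈ K, and n ∈ ℕ. Then (kγ)ⁿ = k · (γkγ⁻¹) · (γ²kγ⁻²) ⋯ (γ^{n−1} k γ^{−(n−1)}) · γⁿ, and consequently |μ(kγ) − μ(k) − μ(γ)| ≤ D(μ)/n for all n ≥ 1, whence μ(kγ) = μ(k) + μ(γ). -/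
private lemma eq_zero_of_abs_le_div (a C : ℝ) (h : ∀ n : ℕ, 1 ≤ n → |a| ≤ C / n) :
    a = 0 := by
  by_contra ha
  have ha' : 0 < |a| := abs_pos.mpr ha
  have hC : 0 < C := lt_of_lt_of_le ha' (by simpa using h 1 le_rfl)
  obtain ⟨n, hn⟩ := exists_nat_gt (C / |a|)
  have hn0 : 0 < (n : ℝ) := lt_trans (div_pos hC ha') hn
  have hn1 : 1 ≤ n := by exact_mod_cast hn0
  have hlt : C < n * |a| := (div_lt_iff₀ ha').mp hn
  have := h n hn1
  rw [le_div_iff₀ hn0] at this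
  nlinarith

private lemma myConjInv {G : Type*} [Group G] (μ : G → ℝ) (D : ℝ)
    (hdefect : ∀ g h : G, |μ (g * h) - μ g - μ h| ≤ D)
    (hhom : IsHomogeneous μ) (g x : G) : μ (g * x * g⁻¹) = μ x := by
  have hinv : ∀ y : G, μ y⁻¹ = - μ y := by
    intro y
    have := hhom y (-1)
    simpa using this
  have key : ∀ y : G, |μ (g * y * g⁻¹) - μ y| ≤ 2 * D := by
    intro y
    have h1 := hdefect g y
    have h2 := hdefect (g * y) g⁻¹
    rw [hinv g] at h2
    calc |μ (g * y * g⁻¹) - μ y|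
        = |(μ (g * y * g⁻¹) - μ (g * y) - -μ g) + (μ (g * y) - μ g - μ y)| := by ring_nf
      _ ≤ |μ (g * y * g⁻¹) - μ (g * y) - -μ g| + |μ (g * y) - μ g - μ y| := abs_add_le _ _
      _ ≤ D + D := add_le_add h2 h1
      _ = 2 * D := by ring
  apply sub_eq_zero.mp
  apply eq_zero_of_abs_le_div _ (2 * D)
  intro n hn
  have hconj : (g * x * g⁻¹) ^ (n : ℤ) = g * x ^ (n : ℤ) * g⁻¹ := by
    rw [conj_zpow]
  have hkey := key (x ^ (n : ℤ))
  rw [← hconj, hhom (g * x * g⁻¹) n, hhom x n] at hkey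
  have hn0 : 0 < (n : ℝ) := by exact_mod_cast hn
  rw [le_div_iff₀ hn0]
  calc |μ (g * x * g⁻¹) - μ x| * n
      = |(n : ℝ) * μ (g * x * g⁻¹) - n * μ x| := by
        have h3 : (n : ℝ) * μ (g * x * g⁻¹) - n * μ x = n * (μ (g * x * g⁻¹) - μ x) := by
          ring
        rw [h3, abs_mul, abs_of_pos hn0, mul_comm]
    _ ≤ 2 * D := hkey

/-- the commutator-conjugation expansion of `(kγ)ⁿ`, the resulting
estimate `|μ(kγ) − μ(k) − μ(γ)| ≤ D/n`, and the equality `μ(kγ) = μ(k) + μ(γ)`. -/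
theorem kgamma_pow_expansion {Γ : Type*} [Group Γ] (K : Subgroup Γ) [K.Normal]
    (μ : Γ → ℝ) (D : ℝ)
    (hdefect : ∀ g h : Γ, |μ (g * h) - μ g - μ h| ≤ D)
    (hhom : IsHomogeneous μ)
    (hrestr : ∀ k k' : Γ, k ∈ K → k' ∈ K → μ (k * k') = μ k + μ k')
    (γ k : Γ) (hk : k ∈ K) :
    (∀ n : ℕ, (k * γ) ^ n =
        (List.ofFn fun j : Fin n => γ ^ (j : ℕ) * k * (γ ^ (j : ℕ))⁻¹).prod * γ ^ n) ∧
    (∀ n : ℕ, 1 ≤ n → |μ (k * γ) - μ k - μ γ| ≤ D / n) ∧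
    μ (k * γ) = μ k + μ γ := by
  -- part 1 : the expansion
  have hexp : ∀ n : ℕ, (k * γ) ^ n =
      (List.ofFn fun j : Fin n => γ ^ (j : ℕ) * k * (γ ^ (j : ℕ))⁻¹).prod * γ ^ n := by
    intro n
    induction n with
    | zero => simp
    | succ n ih =>
      rw [pow_succ, ih, List.ofFn_succ', List.concat_eq_append, List.prod_append]
      simp only [Fin.coe_castSucc, Fin.val_last, List.prod_cons, List.prod_nil, mul_one]
      group
  -- membership and μ-value of the product
  have hmem : ∀ n : ℕ,
      (List.ofFn fun j : Fin n => γ ^ (j : ℕ) * k * (γ ^ (j : ℕ))⁻¹).prod ∈ K := by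
    intro n
    apply Subgroup.list_prod_mem
    intro x hx
    rw [List.mem_ofFn] at hx
    obtain ⟨j, rfl⟩ := hx
    exact Subgroup.Normal.conj_mem ‹K.Normal› k hk _
  have hval : ∀ n : ℕ,
      μ (List.ofFn fun j : Fin n => γ ^ (j : ℕ) * k * (γ ^ (j : ℕ))⁻¹).prod = n * μ k := by
    intro n
    induction n with
    | zero =>
      simp only [List.ofFn_zero, List.prod_nil, Nat.cast_zero, zero_mul]
      have := hhom 1 0
      simpa using this
    | succ n ih =>
      rw [List.ofFn_succ', List.concat_eq_append, List.prod_append]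
      simp only [Fin.coe_castSucc, Fin.val_last, List.prod_cons, List.prod_nil, mul_one]
      rw [hrestr _ _ (hmem n) (Subgroup.Normal.conj_mem ‹K.Normal› k hk _), ih,
        myConjInv μ D hdefect hhom (γ ^ n) k]
      push_cast
      ring
  -- part 2 : the estimate
  have hest : ∀ n : ℕ, 1 ≤ n → |μ (k * γ) - μ k - μ γ| ≤ D / n := by
    intro n hn
    have hn0 : 0 < (n : ℝ) := by exact_mod_cast hn
    have h1 := hdefect (List.ofFn fun j : Fin n => γ ^ (j : ℕ) * k * (γ ^ (j : ℕ))⁻¹).prod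
      (γ ^ n)
    rw [← hexp n, hval n] at h1
    have hkg : μ ((k * γ) ^ n) = n * μ (k * γ) := by
      have := hhom (k * γ) n; rw [zpow_natCast] at this; exact_mod_cast this
    have hg : μ (γ ^ n) = n * μ γ := by
      have := hhom γ n; rw [zpow_natCast] at this; exact_mod_cast this
    rw [hkg, hg] at h1
    rw [le_div_iff₀ hn0]
    calc |μ (k * γ) - μ k - μ γ| * n
        = |(n : ℝ) * μ (k * γ) - n * μ k - n * μ γ| := by
          have h3 : (n : ℝ) * μ (k * γ) - n * μ k - n * μ γ
              = n * (μ (k * γ) - μ k - μ γ) := by ring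
          rw [h3, abs_mul, abs_of_pos hn0, mul_comm]
      _ ≤ D := h1
  refine ⟨hexp, hest, ?_⟩
  have := eq_zero_of_abs_le_div (μ (k * γ) - μ k - μ γ) D hest
  linarith
end

section
/- Let 1 → K → Γ →^π G → 1 be an exact sequence of groups and A an abelian group. The kernel of the map 𝔡 : 𝒞(Γ) → H²(G;A), F ↦ [𝔇(F)], equals H¹(Γ;A) + π*C¹(G;A), i.e., 𝔇(F) is a coboundary on G if and only if F = f + π*φ for some group homomorphism f : Γ → A and some function φ : G → A. -/
/-- the kernel of `𝔡 : 𝒞(Γ) → H²(G;A)` is `H¹(Γ;A) + π*C¹(G;A)`: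
`𝔇(F)` is a coboundary on `G` iff `F = f + π*φ` for a homomorphism `f : Γ → A`
and a function `φ : G → A`. -/
theorem kernel_of_frakd {K Γ G : Type*} [Group K] [Group Γ] [Group G]
    {A : Type*} [AddCommGroup A]
    (i : K →* Γ) (π : Γ →* G)
    (hi : Function.Injective i) (hπ : Function.Surjective π)
    (hexact : i.range = π.ker)
    (F : Γ → A)
    (hF : ∀ (γ : Γ) (k : K),
      F (i k * γ) = F γ + F (i k) ∧ F (γ * i k) = F γ + F (i k))
    (c : G → G → A)
    (hc : ∀ (g₁ g₂ : G) (γ₁ γ₂ : Γ), π γ₁ = g₁ → π γ₂ = g₂ →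
      c g₁ g₂ = F γ₂ - F (γ₁ * γ₂) + F γ₁) :
    (∃ φ : G → A, ∀ g₁ g₂ : G, c g₁ g₂ = φ g₁ + φ g₂ - φ (g₁ * g₂)) ↔
    (∃ f : Γ → A, (∀ a b : Γ, f (a * b) = f a + f b) ∧
      ∃ φ : G → A, ∀ γ : Γ, F γ = f γ + φ (π γ)) := by
  constructor
  · rintro ⟨φ, hφ⟩
    refine ⟨fun γ => F γ - φ (π γ), ?_, φ, fun γ => by simp⟩
    intro a b
    have key : F b - F (a * b) + F a = φ (π a) + φ (π b) - φ (π a * π b) :=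
      (hc (π a) (π b) a b rfl rfl).symm.trans (hφ (π a) (π b))
    have hab : F (a * b) = F b + F a - (φ (π a) + φ (π b) - φ (π a * π b)) := by
      rw [← key]; abel
    simp only [map_mul, hab]
    abel
  · rintro ⟨f, hfhom, φ, hFeq⟩
    refine ⟨φ, fun g₁ g₂ => ?_⟩
    obtain ⟨γ₁, h1⟩ := hπ g₁
    obtain ⟨γ₂, h2⟩ := hπ g₂
    rw [hc g₁ g₂ γ₁ γ₂ h1 h2, hFeq, hFeq, hFeq, hfhom, map_mul, h1, h2]
    abel
end

section
/- Let π : Γ → G be a surjective group homomorphism with kernel K, and let μ ∈ Q(Γ) ∩ 𝒞(Γ). Then the pullback π*𝔡_b(μ) of the bounded cohomology class 𝔡_b(μ) = [𝔇(μ)] ∈ H_b²(G;ℝ) equals the class [δμ] = 𝐝(μ) ∈ H_b²(Γ;ℝ). Consequently, if Γ has no nontrivial homomorphisms to ℝ and μ is not a homomorphism, then 𝔡_b(μ) ≠ 0 in H_b²(G;ℝ). -/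
/-- for `μ ∈ Q(Γ) ∩ 𝒞(Γ)`, the pullback `π*𝔡_b(μ)` equals
`𝐝(μ) = [δμ]` in `H_b²(Γ;ℝ)` (the pulled-back cocycle differs from `δμ` by the
coboundary of a bounded function); consequently, if `Γ` admits no nontrivial
homomorphism to `ℝ` and `μ` is not a homomorphism, then `𝔡_b(μ) ≠ 0` in
`H_b²(G;ℝ)`. -/
theorem pullback_db_eq_d {Γ G : Type*} [Group Γ] [Group G]
    (π : Γ →* G) (hπ : Function.Surjective π)
    (μ : Γ → ℝ) (hqm : IsQuasimorphism μ) (hhom : IsHomogeneous μ)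
    (hC : ∀ γ k : Γ, k ∈ π.ker → μ (k * γ) = μ γ + μ k ∧ μ (γ * k) = μ γ + μ k)
    (c : G → G → ℝ)
    (hc : ∀ (g₁ g₂ : G) (γ₁ γ₂ : Γ), π γ₁ = g₁ → π γ₂ = g₂ →
      c g₁ g₂ = μ γ₂ - μ (γ₁ * γ₂) + μ γ₁) :
    (∃ b : Γ → ℝ, (∃ C : ℝ, ∀ γ : Γ, |b γ| ≤ C) ∧
      ∀ γ₁ γ₂ : Γ,
        c (π γ₁) (π γ₂) - (μ γ₁ + μ γ₂ - μ (γ₁ * γ₂)) =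
          b γ₁ + b γ₂ - b (γ₁ * γ₂)) ∧
    ((∀ f : Γ → ℝ, (∀ a b : Γ, f (a * b) = f a + f b) → f = 0) →
      (¬ ∀ a b : Γ, μ (a * b) = μ a + μ b) →
      ¬ ∃ b : G → ℝ, (∃ C : ℝ, ∀ g : G, |b g| ≤ C) ∧
        ∀ g₁ g₂ : G, c g₁ g₂ = b g₁ + b g₂ - b (g₁ * g₂)) := by
  constructor
  · refine ⟨fun _ => 0, ⟨0, fun _ => by simp⟩, fun γ₁ γ₂ => ?_⟩
    rw [hc (π γ₁) (π γ₂) γ₁ γ₂ rfl rfl]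
    ring
  · rintro hnf hnh ⟨b, ⟨C, hCb⟩, hb⟩
    -- μ - b ∘ π is a homomorphism
    have hadd : ∀ a b' : Γ, (μ (a * b') - b (π (a * b'))) =
        (μ a - b (π a)) + (μ b' - b (π b')) := by
      intro a b'
      have h1 := hc (π a) (π b') a b' rfl rfl
      have h2 := hb (π a) (π b')
      rw [h1] at h2
      rw [map_mul]
      linarith
    have hf := hnf (fun γ => μ γ - b (π γ)) hadd
    have hμb : ∀ γ : Γ, μ γ = b (π γ) := by
      intro γ
      have := congrFun hf γ
      simp at this
      linarith
    -- μ is bounded, hence zero by homogeneity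
    have hμ0 : ∀ γ : Γ, μ γ = 0 := by
      intro γ
      by_contra h
      obtain ⟨n, hn⟩ := exists_nat_gt (C / |μ γ|)
      have hpos : 0 < |μ γ| := abs_pos.mpr h
      have h1 : |μ (γ ^ (n : ℤ))| ≤ C := by rw [hμb]; exact hCb _
      rw [hhom γ n] at h1
      rw [abs_mul] at h1
      have h2 : (C / |μ γ|) < (n : ℝ) := hn
      have : |((n : ℤ) : ℝ)| = (n : ℝ) := by simp
      rw [this] at h1
      have : C < n * |μ γ| := by
        rw [div_lt_iff₀ hpos] at h2; linarith
      linarith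
    exact hnh fun a b' => by simp [hμ0]
end

section
/- Let 1 → K → Γ →^π G → 1 be an exact sequence of groups, μ ∈ 𝒞(Γ) ∩ Q(Γ), and let c ∈ H²(G;ℝ) be the class of 𝔇(μ). Let Σ_h be a closed oriented surface of genus h ≥ 1 with fundamental group π₁(Σ_h) = ⟨a₁,…,a_{2h} | [a₁,a₂]⋯[a_{2h-1},a_{2h}]⟩, and ρ : π₁(Σ_h) → G a homomorphism. Then the characteristic number of the flat bundle with holonomy ρ satisfies |⟨ρ*c, [Σ_h]⟩| ≤ D(μ)·(4h − 4). (Algebraic form: if g̃₁,…,g̃_{2h} ∈ Γ are lifts of ρ(a₁),…,ρ(a_{2h}), then the element [g̃₁,g̃₂]⋯[g̃_{2h-1},g̃_{2h}] lies in K and |μ([g̃₁,g̃₂]⋯[g̃_{2h-1},g̃_{2h}])| ≤ D(μ)(4h−4).) -/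
open scoped commutatorElement

section Aux

variable {Γ : Type*} [Group Γ] {μ : Γ → ℝ} {D : ℝ}

lemma mw_mu_one (hhom : IsHomogeneous μ) : μ 1 = 0 := by
  have := hhom 1 0; simpa using this

lemma mw_mu_inv (hhom : IsHomogeneous μ) (g : Γ) : μ g⁻¹ = - μ g := by
  have := hhom g (-1); simpa using this

lemma mw_D_nonneg (hdefect : ∀ g h : Γ, |μ (g * h) - μ g - μ h| ≤ D)
    (hhom : IsHomogeneous μ) : 0 ≤ D := by
  have := hdefect 1 1
  simp [mw_mu_one hhom] at this
  linarith

lemma mw_conj (hdefect : ∀ g h : Γ, |μ (g * h) - μ g - μ h| ≤ D)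
    (hhom : IsHomogeneous μ) (g c : Γ) : μ (g * c * g⁻¹) = μ c := by
  by_contra hne
  have hd : |μ (g * c * g⁻¹) - μ c| > 0 := by
    exact abs_pos.mpr (sub_ne_zero_of_ne hne)
  obtain ⟨n, hn⟩ := exists_nat_gt ((2 * D) / |μ (g * c * g⁻¹) - μ c|)
  have key : (n : ℝ) * |μ (g * c * g⁻¹) - μ c| ≤ 2 * D := by
    have e1 : (g * c * g⁻¹) ^ (n : ℤ) = g * c ^ (n : ℤ) * g⁻¹ := by
      simp [conj_zpow]
    have h1 : μ ((g * c * g⁻¹) ^ (n : ℤ)) = n * μ (g * c * g⁻¹) := hhom _ _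
    have h2 : μ (c ^ (n : ℤ)) = n * μ c := hhom _ _
    have hA := hdefect g (c ^ (n : ℤ) * g⁻¹)
    have hB := hdefect (c ^ (n : ℤ)) g⁻¹
    rw [mw_mu_inv hhom] at hB
    have e2 : g * (c ^ (n : ℤ) * g⁻¹) = (g * c * g⁻¹) ^ (n : ℤ) := by
      rw [e1]; group
    rw [e2, h1] at hA
    rw [h2] at hB
    have : |(n : ℝ) * μ (g * c * g⁻¹) - (n : ℝ) * μ c| ≤ 2 * D := by
      have := abs_add_le (↑n * μ (g * c * g⁻¹) - μ g - μ (c ^ (n : ℤ) * g⁻¹))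
        (μ (c ^ (n : ℤ) * g⁻¹) - ↑n * μ c + μ g)
      have habs : |μ (c ^ (n : ℤ) * g⁻¹) - ↑n * μ c + μ g| ≤ D := by
        have : μ (c ^ (n : ℤ) * g⁻¹) - ↑n * μ c + μ g
            = μ (c ^ (n : ℤ) * g⁻¹) - ↑n * μ c - -μ g := by ring
        rw [this]; exact hB
      calc |(n : ℝ) * μ (g * c * g⁻¹) - (n : ℝ) * μ c|
          = |(↑n * μ (g * c * g⁻¹) - μ g - μ (c ^ (n : ℤ) * g⁻¹))
            + (μ (c ^ (n : ℤ) * g⁻¹) - ↑n * μ c + μ g)| := by ring_nf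
        _ ≤ _ := abs_add_le _ _
        _ ≤ D + D := add_le_add hA habs
        _ = 2 * D := by ring
    calc (n : ℝ) * |μ (g * c * g⁻¹) - μ c| = |(n : ℝ) * (μ (g * c * g⁻¹) - μ c)| := by
          rw [abs_mul, Nat.abs_cast]
      _ = |(n : ℝ) * μ (g * c * g⁻¹) - (n : ℝ) * μ c| := by ring_nf
      _ ≤ 2 * D := this
  have : (2 * D) / |μ (g * c * g⁻¹) - μ c| < n := hn
  rw [div_lt_iff₀ hd] at this
  linarith

lemma mw_mul_comm (hdefect : ∀ g h : Γ, |μ (g * h) - μ g - μ h| ≤ D)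
    (hhom : IsHomogeneous μ) (u v : Γ) : μ (u * v) = μ (v * u) := by
  have := mw_conj hdefect hhom u (v * u)
  have e : u * (v * u) * u⁻¹ = u * v := by group
  rw [e] at this
  exact this

lemma mw_comm_bound (hdefect : ∀ g h : Γ, |μ (g * h) - μ g - μ h| ≤ D)
    (hhom : IsHomogeneous μ) (u v : Γ) : |μ ⁅u, v⁆| ≤ D := by
  have e : ⁅u, v⁆ = (u * v) * (v * u)⁻¹ := by
    rw [commutatorElement_def]; group
  have h1 := hdefect (u * v) (v * u)⁻¹
  rw [mw_mu_inv hhom, mw_mul_comm hdefect hhom v u] at h1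
  rw [e]
  have : μ (u * v * (v * u)⁻¹) - μ (u * v) - -μ (u * v) = μ (u * v * (v * u)⁻¹) := by ring
  rw [this] at h1
  exact h1

lemma mw_list_bound (hdefect : ∀ g h : Γ, |μ (g * h) - μ g - μ h| ≤ D)
    (hhom : IsHomogeneous μ) :
    ∀ l : List Γ, l ≠ [] → |μ l.prod - (l.map μ).sum| ≤ D * (l.length - 1) := by
  intro l
  induction l with
  | nil => intro hl; exact absurd rfl hl
  | cons c t ih =>
    intro _
    cases t with
    | nil => simp
    | cons d t' =>
      have ht : (d :: t') ≠ [] := by simp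
      have h2 := ih ht
      have h1 := hdefect c (d :: t').prod
      have key : |μ ((c :: d :: t').prod) - ((c :: d :: t').map μ).sum|
          ≤ D + D * ((d :: t').length - 1) := by
        simp only [List.prod_cons, List.map_cons, List.sum_cons]
        calc |μ (c * (d * t'.prod)) - (μ c + (μ d + (t'.map μ).sum))|
            = |(μ (c * (d :: t').prod) - μ c - μ ((d :: t').prod))
              + (μ ((d :: t').prod) - ((d :: t').map μ).sum)| := by
              simp only [List.prod_cons, List.map_cons, List.sum_cons]; ring_nf
          _ ≤ _ := abs_add_le _ _
          _ ≤ D + D * ((d :: t').length - 1) := add_le_add h1 h2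
      have hlen : ((c :: d :: t').length : ℝ) - 1 = ((d :: t').length : ℝ) := by
        simp only [List.length_cons]; push_cast; ring
      rw [hlen]
      calc |μ ((c :: d :: t').prod) - ((c :: d :: t').map μ).sum|
          ≤ D + D * ((d :: t').length - 1) := key
        _ = D * ((d :: t').length) := by ring

end Aux

/-- Milnor–Wood type inequality, algebraic form: if
`ρ(a₁),…,ρ(a_{2h})` satisfy the surface group relation in `G` (product of the
`h` commutators is `1`) and `g̃ⱼ` are lifts in `Γ`, then the product of
commutators of the lifts lies in `K = ker π`, and `|μ|` of it is at most
`D(μ)(4h − 4)`. Here `μ ∈ 𝒞(Γ) ∩ Q(Γ)` with defect at most `D`. -/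
theorem milnor_wood_inequality {Γ G : Type*} [Group Γ] [Group G]
    (π : Γ →* G) (hπ : Function.Surjective π)
    (μ : Γ → ℝ) (D : ℝ)
    (hdefect : ∀ g h : Γ, |μ (g * h) - μ g - μ h| ≤ D)
    (hhom : IsHomogeneous μ)
    (hC : ∀ γ k : Γ, k ∈ π.ker → μ (k * γ) = μ γ + μ k ∧ μ (γ * k) = μ γ + μ k)
    (h : ℕ) (hh : 1 ≤ h)
    (x y : Fin h → G)
    (hrel : (List.ofFn fun j : Fin h => ⁅x j, y j⁆).prod = 1)
    (a b : Fin h → Γ)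
    (ha : ∀ j : Fin h, π (a j) = x j) (hb : ∀ j : Fin h, π (b j) = y j) :
    (List.ofFn fun j : Fin h => ⁅a j, b j⁆).prod ∈ π.ker ∧
    |μ ((List.ofFn fun j : Fin h => ⁅a j, b j⁆).prod)| ≤ D * (4 * h - 4) := by
  have hker : (List.ofFn fun j : Fin h => ⁅a j, b j⁆).prod ∈ π.ker := by
    rw [MonoidHom.mem_ker, map_list_prod, List.map_ofFn]
    have e : (π ∘ fun j : Fin h => ⁅a j, b j⁆) = fun j : Fin h => ⁅x j, y j⁆ := by
      funext j
      simp [Function.comp, map_commutatorElement, ha, hb]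
    rw [e]; exact hrel
  refine ⟨hker, ?_⟩
  have hD : 0 ≤ D := mw_D_nonneg hdefect hhom
  rcases Nat.lt_or_ge h 2 with h1 | h2
  · -- h = 1
    have heq : h = 1 := le_antisymm (by omega) hh
    subst heq
    have hlist : (List.ofFn fun j : Fin 1 => ⁅a j, b j⁆) = [⁅a 0, b 0⁆] := by
      simp [List.ofFn_succ]
    rw [hlist] at hker ⊢
    simp only [List.prod_cons, List.prod_nil, mul_one] at hker ⊢
    have hCk := (hC (b 0 * a 0) ⁅a 0, b 0⁆ hker).1
    have e : ⁅a 0, b 0⁆ * (b 0 * a 0) = a 0 * b 0 := by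
      rw [commutatorElement_def]; group
    rw [e] at hCk
    have := mw_mul_comm hdefect hhom (a 0) (b 0)
    have hz : μ ⁅a 0, b 0⁆ = 0 := by linarith
    rw [hz]
    simp
  · -- h ≥ 2
    set l := List.ofFn fun j : Fin h => ⁅a j, b j⁆ with hl
    have hlne : l ≠ [] := by
      rw [hl]
      simp [List.ofFn_eq_nil_iff]
      omega
    have hlen : l.length = h := by rw [hl]; simp
    have hlb := mw_list_bound hdefect hhom l hlne
    have hsum : |(l.map μ).sum| ≤ D * h := by
      rw [hl, List.map_ofFn, List.sum_ofFn]
      calc |∑ j : Fin h, μ ⁅a j, b j⁆| ≤ ∑ j : Fin h, |μ ⁅a j, b j⁆| :=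
            Finset.abs_sum_le_sum_abs _ _
        _ ≤ ∑ _j : Fin h, D := Finset.sum_le_sum fun j _ =>
            mw_comm_bound hdefect hhom (a j) (b j)
        _ = D * h := by simp [mul_comm]
    have h3 : |μ l.prod| ≤ |μ l.prod - (l.map μ).sum| + |(l.map μ).sum| := by
      have := abs_add_le (μ l.prod - (l.map μ).sum) ((l.map μ).sum)
      simpa using this
    rw [hlen] at hlb
    have hbound : |μ l.prod| ≤ D * (2 * h - 1) := by
      calc |μ l.prod| ≤ D * ((h : ℝ) - 1) + D * h := by linarith
        _ = D * (2 * h - 1) := by ring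
    have hfin : D * (2 * (h : ℝ) - 1) ≤ D * (4 * h - 4) := by
      apply mul_le_mul_of_nonneg_left _ hD
      have : (2 : ℝ) ≤ (h : ℝ) := by exact_mod_cast h2
      linarith
    linarith
end

section
/- Let 0 → A → Γ →^π G → 1 be a central extension with A abelian, and suppose every homomorphism Γ → ℝ is trivial (H¹(Γ;ℝ) = 0). If μ ∈ Q(Γ) does not descend to G (i.e., μ ∉ π*Q(G), equivalently there is no homogeneous quasi-morphism ν on G with μ = ν ∘ π), then the ordinary group cohomology class 𝔡(μ) = [𝔇(μ)] ∈ H²(G;ℝ) is non-zero. -/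
/-- for a central extension `0 → A → Γ →π G → 1` with
`H¹(Γ;ℝ) = 0`, if a homogeneous quasi-morphism `μ` on `Γ` does not descend to
`G`, then the ordinary cohomology class `𝔡(μ) = [𝔇(μ)] ∈ H²(G;ℝ)` is non-zero,
i.e. the cocycle `𝔇(μ)` is not a coboundary. -/
theorem d_mu_nonzero_of_not_descend {A Γ G : Type*} [CommGroup A] [Group Γ] [Group G]
    (i : A →* Γ) (π : Γ →* G)
    (hi : Function.Injective i) (hπ : Function.Surjective π)
    (hexact : i.range = π.ker)
    (hcentral : ∀ (a : A) (γ : Γ), i a * γ = γ * i a)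
    (hH1 : ∀ f : Γ → ℝ, (∀ a b : Γ, f (a * b) = f a + f b) → f = 0)
    (μ : Γ → ℝ) (hqm : IsQuasimorphism μ) (hhom : IsHomogeneous μ)
    (hnodescend : ¬ ∃ ν : G → ℝ, IsQuasimorphism ν ∧ IsHomogeneous ν ∧ μ = ν ∘ π)
    (c : G → G → ℝ)
    (hc : ∀ (g₁ g₂ : G) (γ₁ γ₂ : Γ), π γ₁ = g₁ → π γ₂ = g₂ →
      c g₁ g₂ = μ γ₂ - μ (γ₁ * γ₂) + μ γ₁) :
    ¬ ∃ φ : G → ℝ, ∀ g₁ g₂ : G, c g₁ g₂ = φ g₁ + φ g₂ - φ (g₁ * g₂) := by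
  rintro ⟨φ, hφ⟩
  have key : ∀ γ : Γ, μ γ = φ (π γ) := by
    have hf : (fun γ : Γ => μ γ - φ (π γ)) = 0 := by
      apply hH1
      intro a b
      have h1 := hc (π a) (π b) a b rfl rfl
      rw [hφ (π a) (π b)] at h1
      simp only [map_mul] at h1 ⊢
      linarith
    intro γ
    have := congrFun hf γ
    simp only [Pi.zero_apply] at this
    linarith
  apply hnodescend
  refine ⟨φ, ?_, ?_, ?_⟩
  · obtain ⟨D, hD⟩ := hqm
    refine ⟨D, fun g h => ?_⟩
    obtain ⟨a, ha⟩ := hπ g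
    obtain ⟨b, hb⟩ := hπ h
    have := hD a b
    rw [← ha, ← hb, ← map_mul, ← key, ← key, ← key]
    exact this
  · intro g n
    obtain ⟨a, ha⟩ := hπ g
    rw [← ha, ← map_zpow, ← key, ← key, hhom]
  · funext γ
    simpa using key γ
end
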